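/- arXiv:2409.06938 — 2 statements merged into one kernel-verified Lean document; each statement's English description precedes it below -/
import Mathlib

section
/- The relaxed problem max_{τ∈A} F(τ) and the hybrid problem max_{τ∈B, Θ∈Ω^K} L(τ,Θ) have the same optimal value, and τ* solves the relaxed problem restricted to B together with any Θ* achieving F(τ*) if and only if (τ*,Θ*) solves the hybrid problem. -/
def simplexSet (N K : ℕ) : Set (Fin N → Fin K → ℝ) :=
  {τ | (∀ n k, 0 ≤ τ n k ∧ τ n k ≤ 1) ∧ ∀ n, ∑ k : Fin K, τ n k = 1}

def binarySet (N K : ℕ) : Set (Fin N → Fin K → ℝ) :=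
  {τ | (∀ n k, τ n k = 0 ∨ τ n k = 1) ∧ ∀ n, ∑ k : Fin K, τ n k = 1}

/-- The relaxed problem `max_{τ∈A} F(τ)` and the hybrid problem
`max_{τ∈B, Θ∈Ω^K} L(τ,Θ)` have the same optimal value; and `τ*` solves the
relaxed problem together with any `Θ*` achieving `F(τ*)` iff `(τ*,Θ*)` solves
the hybrid problem. -/
theorem stmt5 {N K : ℕ} {Ω : Type*} [TopologicalSpace Ω] [CompactSpace Ω] [Nonempty Ω]
    (ℓ : Fin N → Ω → ℝ) (hℓ : ∀ n, Continuous (ℓ n))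
    (L : (Fin N → Fin K → ℝ) → (Fin K → Ω) → ℝ)
    (hL : ∀ τ Θ, L τ Θ = ∑ n : Fin N, ∑ k : Fin K, τ n k * ℓ n (Θ k))
    (F : (Fin N → Fin K → ℝ) → ℝ)
    (hF : ∀ τ, IsGreatest (Set.range (L τ)) (F τ)) :
    sSup (F '' simplexSet N K) =
      sSup {x | ∃ τ ∈ binarySet N K, ∃ Θ : Fin K → Ω, x = L τ Θ} ∧
    ∀ τs ∈ binarySet N K, ∀ Θs : Fin K → Ω,
      ((∀ τ ∈ simplexSet N K, F τ ≤ F τs) ∧ L τs Θs = F τs) ↔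
        (∀ τ ∈ binarySet N K, ∀ Θ : Fin K → Ω, L τ Θ ≤ L τs Θs) := by
  -- basic facts
  have hle : ∀ τ Θ, L τ Θ ≤ F τ := fun τ Θ => (hF τ).2 ⟨Θ, rfl⟩
  have hach : ∀ τ, ∃ Θ, L τ Θ = F τ := fun τ => (hF τ).1
  have sub : binarySet N K ⊆ simplexSet N K := by
    rintro τ ⟨h01, hs⟩
    refine ⟨fun n k => ?_, hs⟩
    rcases h01 n k with h | h <;> rw [h] <;> norm_num
  -- key domination lemma: any τ in the simplex is dominated by a binary τ'
  have key : ∀ τ ∈ simplexSet N K, ∀ Θ : Fin K → Ω,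
      ∃ τ' ∈ binarySet N K, L τ Θ ≤ L τ' Θ := by
    rintro τ ⟨hpos, hsum⟩ Θ
    have hargmax : ∀ n : Fin N, ∃ kn : Fin K, ∀ k : Fin K, ℓ n (Θ k) ≤ ℓ n (Θ kn) := by
      intro n
      have hK : (Finset.univ : Finset (Fin K)).Nonempty := by
        rcases Nat.eq_zero_or_pos K with h0 | hpos'
        · subst h0; have := hsum n; simp at this
        · exact ⟨⟨0, hpos'⟩, Finset.mem_univ _⟩
      obtain ⟨kn, _, hkn⟩ := Finset.exists_max_image Finset.univ (fun k => ℓ n (Θ k)) hK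
      exact ⟨kn, fun k => hkn k (Finset.mem_univ k)⟩
    choose g hg using hargmax
    refine ⟨fun n k => if k = g n then 1 else 0, ⟨fun n k => ?_, fun n => ?_⟩, ?_⟩
    · by_cases h : k = g n <;> simp [h]
    · simp [Finset.sum_ite_eq']
    · rw [hL, hL]
      refine Finset.sum_le_sum fun n _ => ?_
      have h1 : ∑ k : Fin K, (if k = g n then (1:ℝ) else 0) * ℓ n (Θ k)
          = ℓ n (Θ (g n)) := by
        rw [Finset.sum_eq_single (g n)]
        · simp
        · intro b _ hb; simp [hb]
        · intro h; exact absurd (Finset.mem_univ _) h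
      rw [h1]
      calc ∑ k : Fin K, τ n k * ℓ n (Θ k)
          ≤ ∑ k : Fin K, τ n k * ℓ n (Θ (g n)) :=
            Finset.sum_le_sum fun k _ =>
              mul_le_mul_of_nonneg_left (hg n k) (hpos n k).1
        _ = (∑ k : Fin K, τ n k) * ℓ n (Θ (g n)) := by rw [Finset.sum_mul]
        _ = ℓ n (Θ (g n)) := by rw [hsum n, one_mul]
  constructor
  · apply csSup_eq_csSup_of_forall_exists_le
    · rintro x ⟨τ, hτ, rfl⟩
      obtain ⟨Θ, hΘ⟩ := hach τ
      obtain ⟨τ', hτ', hle'⟩ := key τ hτ Θ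
      exact ⟨L τ' Θ, ⟨τ', hτ', Θ, rfl⟩, hΘ ▸ hle'⟩
    · rintro y ⟨τ, hτ, Θ, rfl⟩
      exact ⟨F τ, ⟨τ, sub hτ, rfl⟩, hle τ Θ⟩
  · intro τs hτs Θs
    constructor
    · rintro ⟨hopt, hach'⟩ τ hτ Θ
      calc L τ Θ ≤ F τ := hle τ Θ
        _ ≤ F τs := hopt τ (sub hτ)
        _ = L τs Θs := hach'.symm
    · intro h
      have hach' : L τs Θs = F τs := by
        obtain ⟨Θ, hΘ⟩ := hach τs
        exact le_antisymm (hle τs Θs) (hΘ ▸ h τs hτs Θ)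
      refine ⟨fun τ hτ => ?_, hach'⟩
      obtain ⟨Θ, hΘ⟩ := hach τ
      obtain ⟨τ', hτ', hle'⟩ := key τ hτ Θ
      calc F τ = L τ Θ := hΘ.symm
        _ ≤ L τ' Θ := hle'
        _ ≤ L τs Θs := h τ' hτ' Θ
        _ = F τs := hach'
end

section
/- Let λ : Ω → ℝ be twice continuously differentiable on a connected open set Ω ⊆ ℝ^q with negative definite Hessian at every point, and suppose ∇λ vanishes at some point θ̂ ∈ Ω. Then λ is strictly concave, θ̂ is the unique maximizer of λ on Ω, and λ has no other stationary points in Ω. -/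
/-!
Along a segment `t ↦ x + t • (y - x)` the second derivative of `λ` is
`H (y - x) (y - x) < 0`, so every restriction of `λ` to a segment is strictly concave, hence so
is `λ`. The graph of a strictly concave function lies strictly below each of its tangent planes
away from the point of tangency, so a stationary point is a strict global maximizer, and two
distinct stationary points would each have to lie strictly above the other.
-/

open Set AffineMap

lemma strictConcaveOn_of_hasDerivWithinAt2_neg {D : Set ℝ} (hD : Convex ℝ D) {f f' f'' : ℝ → ℝ}
    (hf : ContinuousOn f D) (hf' : ∀ x ∈ interior D, HasDerivWithinAt f (f' x) (interior D) x)
    (hf'' : ∀ x ∈ interior D, HasDerivWithinAt f' (f'' x) (interior D) x)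
    (hf''₀ : ∀ x ∈ interior D, f'' x < 0) : StrictConcaveOn ℝ D f := by
  have hanti : StrictAntiOn f' (interior D) := by
    refine strictAntiOn_of_hasDerivWithinAt_neg (f := f') (f' := f'') hD.interior
      (fun x hx ↦ (hf'' x hx).continuousWithinAt) ?_ ?_ <;> rw [interior_interior]
    exacts [hf'', hf''₀]
  exact hanti.congr (deriv_eqOn isOpen_interior hf').symm |>.strictConcaveOn_of_deriv hD hf

section LineMap

variable {E : Type*} [AddCommGroup E] [Module ℝ E] {s : Set E} {f : E → ℝ} {x y : E}

lemma StrictConcaveOn.comp_lineMap (hf : StrictConcaveOn ℝ s f) (hx : x ∈ s) (hy : y ∈ s)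
    (hxy : x ≠ y) : StrictConcaveOn ℝ (Icc (0 : ℝ) 1) (f ∘ lineMap x y) := by
  refine ⟨convex_Icc (0 : ℝ) 1, fun t ht u hu htu a b ha hb hab ↦ ?_⟩
  have := hf.2 (hf.1.lineMap_mem hx hy ht) (hf.1.lineMap_mem hx hy hu)
    ((lineMap_injective ℝ hxy).ne htu) ha hb hab
  simpa only [Function.comp_apply, Convex.combo_affine_apply hab] using this

lemma strictConcaveOn_of_comp_lineMap (hs : Convex ℝ s)
    (h : ∀ x ∈ s, ∀ y ∈ s, x ≠ y → StrictConcaveOn ℝ (Icc (0 : ℝ) 1) (f ∘ lineMap x y)) :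
    StrictConcaveOn ℝ s f := by
  refine ⟨hs, fun x hx y hy hxy a b ha hb hab ↦ ?_⟩
  have := (h x hx y hy hxy).2 (left_mem_Icc.2 zero_le_one) (right_mem_Icc.2 zero_le_one)
    zero_ne_one ha hb hab
  simpa only [Function.comp_apply, Convex.combo_affine_apply hab, lineMap_apply_zero,
    lineMap_apply_one] using this

end LineMap

section FDeriv

variable {E : Type*} [NormedAddCommGroup E] [NormedSpace ℝ E] {s : Set E} {f : E → ℝ} {x y : E}

lemma StrictConcaveOn.lt_add_of_hasFDerivAt {f' : E →L[ℝ] ℝ} (hf : StrictConcaveOn ℝ s f)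
    (hx : x ∈ s) (hy : y ∈ s) (hxy : x ≠ y) (hf' : HasFDerivAt f f' x) :
    f y < f x + f' (y - x) := by
  have hf'₀ : HasFDerivAt f f' (lineMap x y (0 : ℝ)) := by rwa [lineMap_apply_zero]
  have hslope := (hf.comp_lineMap hx hy hxy).slope_lt_of_hasDerivAt
    (left_mem_Icc.2 zero_le_one) (right_mem_Icc.2 zero_le_one) zero_lt_one
    (hf'₀.comp_hasDerivAt 0 hasDerivAt_lineMap)
  rw [slope_def_field] at hslope
  simp only [Function.comp_apply, lineMap_apply_zero, lineMap_apply_one, sub_zero,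
    div_one] at hslope
  linarith

theorem strictConcaveOn_of_hasFDerivAt2_neg {f' : E → E →L[ℝ] ℝ}
    {f'' : E → E →L[ℝ] E →L[ℝ] ℝ} (hs : Convex ℝ s)
    (hf : ∀ x ∈ s, HasFDerivAt f (f' x) x) (hf' : ∀ x ∈ s, HasFDerivAt f' (f'' x) x)
    (hf''₀ : ∀ x ∈ s, ∀ v ≠ 0, f'' x v v < 0) : StrictConcaveOn ℝ s f := by
  refine strictConcaveOn_of_comp_lineMap hs fun x hx y hy hxy ↦ ?_
  have hmem : ∀ t ∈ Icc (0 : ℝ) 1, lineMap x y t ∈ s := fun t ht ↦ hs.lineMap_mem hx hy ht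
  have hg : ∀ t ∈ Icc (0 : ℝ) 1,
      HasDerivAt (f ∘ lineMap x y) (f' (lineMap x y t) (y - x)) t := fun t ht ↦
    (hf _ (hmem t ht)).comp_hasDerivAt t hasDerivAt_lineMap
  have hg' : ∀ t ∈ Icc (0 : ℝ) 1,
      HasDerivAt (fun t ↦ f' (lineMap x y t) (y - x)) (f'' (lineMap x y t) (y - x) (y - x)) t :=
    fun t ht ↦ by
      simpa using ((hf' _ (hmem t ht)).comp_hasDerivAt t hasDerivAt_lineMap).clm_apply
        (hasDerivAt_const t (y - x))
  refine strictConcaveOn_of_hasDerivWithinAt2_neg (f' := fun t ↦ f' (lineMap x y t) (y - x))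
    (f'' := fun t ↦ f'' (lineMap x y t) (y - x) (y - x)) (convex_Icc 0 1)
    (fun t ht ↦ (hg t ht).continuousAt.continuousWithinAt) (fun t ht ↦ ?_) (fun t ht ↦ ?_)
    (fun t ht ↦ ?_) <;> replace ht := interior_subset ht
  · exact (hg t ht).hasDerivWithinAt
  · exact (hg' t ht).hasDerivWithinAt
  · exact hf''₀ _ (hmem t ht) _ (sub_ne_zero.2 hxy.symm)

end FDeriv

theorem stmt15_general {q : ℕ}
    (Ω : Set (EuclideanSpace ℝ (Fin q))) (hΩ : IsOpen Ω)
    (hΩconv : Convex ℝ Ω)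
    (lam : EuclideanSpace ℝ (Fin q) → ℝ)
    (hC2 : ContDiffOn ℝ 2 lam Ω)
    (H : EuclideanSpace ℝ (Fin q) →
      EuclideanSpace ℝ (Fin q) →L[ℝ] EuclideanSpace ℝ (Fin q) →L[ℝ] ℝ)
    (hH : ∀ θ ∈ Ω, HasFDerivAt (fun θ' => fderiv ℝ lam θ') (H θ) θ)
    (hND : ∀ θ ∈ Ω, ∀ v, v ≠ 0 → H θ v v < 0)
    (θh : EuclideanSpace ℝ (Fin q)) (hθh : θh ∈ Ω)
    (hstat : fderiv ℝ lam θh = 0) :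
    StrictConcaveOn ℝ Ω lam ∧
      (∀ θ ∈ Ω, θ ≠ θh → lam θ < lam θh) ∧
      (∀ θ ∈ Ω, fderiv ℝ lam θ = 0 → θ = θh) := by
  have hdiff : ∀ θ ∈ Ω, HasFDerivAt lam (fderiv ℝ lam θ) θ := fun θ hθ ↦
    ((hC2.differentiableOn two_ne_zero).differentiableAt (hΩ.mem_nhds hθ)).hasFDerivAt
  have hconc : StrictConcaveOn ℝ Ω lam := strictConcaveOn_of_hasFDerivAt2_neg hΩconv hdiff hH hND
  have hmax : ∀ θ₀ ∈ Ω, fderiv ℝ lam θ₀ = 0 → ∀ θ ∈ Ω, θ ≠ θ₀ → lam θ < lam θ₀ :=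
    fun θ₀ hθ₀ hstat₀ θ hθ hne ↦ by
      simpa only [hstat₀, zero_apply, add_zero] using
        hconc.lt_add_of_hasFDerivAt hθ₀ hθ hne.symm (hdiff θ₀ hθ₀)
  refine ⟨hconc, hmax θh hθh hstat, fun θ hθ hstatθ ↦ by_contra fun hne ↦ ?_⟩
  exact (hmax θh hθh hstat θ hθ hne).asymm (hmax θ hθ hstatθ θh hθh (Ne.symm hne))

/-- Mäkeläinen–Schmidt–Styan uniqueness theorem: if
`λ : Ω → ℝ` is twice continuously differentiable on a connected open (convex)
set `Ω ⊆ ℝ^q`, with Hessian `H(θ)` negative definite at every point, and the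
gradient vanishes at `θ̂ ∈ Ω`, then `λ` is strictly concave on `Ω`, `θ̂` is the
unique maximizer of `λ` on `Ω`, and `λ` has no other stationary points. -/
theorem stmt15 {q : ℕ}
    (Ω : Set (EuclideanSpace ℝ (Fin q))) (hΩ : IsOpen Ω)
    (hΩconn : IsConnected Ω) (hΩconv : Convex ℝ Ω)
    (lam : EuclideanSpace ℝ (Fin q) → ℝ)
    (hC2 : ContDiffOn ℝ 2 lam Ω)
    (H : EuclideanSpace ℝ (Fin q) →
      EuclideanSpace ℝ (Fin q) →L[ℝ] EuclideanSpace ℝ (Fin q) →L[ℝ] ℝ)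
    (hH : ∀ θ ∈ Ω, HasFDerivAt (fun θ' => fderiv ℝ lam θ') (H θ) θ)
    (hND : ∀ θ ∈ Ω, ∀ v, v ≠ 0 → H θ v v < 0)
    (θh : EuclideanSpace ℝ (Fin q)) (hθh : θh ∈ Ω)
    (hstat : fderiv ℝ lam θh = 0) :
    StrictConcaveOn ℝ Ω lam ∧
      (∀ θ ∈ Ω, θ ≠ θh → lam θ < lam θh) ∧
      (∀ θ ∈ Ω, fderiv ℝ lam θ = 0 → θ = θh) :=
  stmt15_general Ω hΩ hΩconv lam hC2 H hH hND θh hθh hstat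
end
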